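/- arXiv:1803.06592 — 2 statements merged into one kernel-verified Lean document; each statement's English description precedes it below -/
import Mathlib

section
/- For the Lie algebra $B_2 = \mathfrak{so}_5$, the number of distinct weights of the finite-dimensional irreducible module with highest weight $\lambda = \lambda_1\omega_1 + \lambda_2\omega_2$ (with $\lambda_1, \lambda_2 \in \mathbb{N}_0$, where $\alpha_1$ is the long simple root) equals $1 + 2(\lambda_1+\lambda_2) + 2\lambda_1^2 + \lambda_2^2 + 4\lambda_1\lambda_2$. -/
/-- The simple root `α_i`, written in fundamental-weight (Dynkin-label) coordinates:
its `j`-th Dynkin label is the Cartan matrix entry `A_{ji} = ⟨α_j^∨, α_i⟩`. -/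
def colRoot {r : ℕ} (A : Fin r → Fin r → ℤ) (i : Fin r) : Fin r → ℤ := fun j => A j i

/-- The simple reflection `s_i` on the weight lattice: `s_i(μ) = μ - μ_i α_i`. -/
def simpleRefl {r : ℕ} (A : Fin r → Fin r → ℤ) (i : Fin r) :
    (Fin r → ℤ) → (Fin r → ℤ) :=
  fun μ => μ - μ i • colRoot A i

/-- The Weyl group of the Cartan matrix `A`, realized as the monoid of maps of the weight
lattice generated by the simple reflections (for a finite Weyl group, which consists of
involutions, this closure coincides with the generated group). -/
def weylMonoid {r : ℕ} (A : Fin r → Fin r → ℤ) : Submonoid (Function.End (Fin r → ℤ)) :=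
  Submonoid.closure (Set.range (simpleRefl A))

/-- `μ ≤ λ` in the dominance (root) order: `λ - μ` is a non-negative integer combination
of the simple roots. -/
def rootLE {r : ℕ} (A : Fin r → Fin r → ℤ) (μ lam : Fin r → ℤ) : Prop :=
  ∃ n : Fin r → ℕ, lam = μ + ∑ i, (n i : ℤ) • colRoot A i

/-- The set `P(λ)` of distinct weights of the finite-dimensional irreducible
highest-weight module `L(λ)`: by the classical saturation theorem, for dominant integral
`λ` these are exactly the integral weights `μ` all of whose Weyl conjugates satisfy
`w(μ) ≤ λ` in the dominance order. -/
def weightSet {r : ℕ} (A : Fin r → Fin r → ℤ) (lam : Fin r → ℤ) : Set (Fin r → ℤ) :=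
  {μ | ∀ w ∈ weylMonoid A, rootLE A (w μ) lam}

/-- The Cartan matrix of `B₂ = 𝔰𝔬₅`, with `α₁` the long simple root. -/
def cartanB2 : Fin 2 → Fin 2 → ℤ := ![![2, -1], ![-2, 2]]

/-!
In the coordinates `x = 2μ₀ + μ₁`, `y = μ₁` (twice the orthonormal coordinates) the simple
reflections act as `(x, y) ↦ (y, x)` and `(x, y) ↦ (x, -y)`, so the Weyl group is the group of
signed permutations. A weight `μ` lies below `λ = ![a, b]` iff `x ≤ 2a + b`,
`x + y ≤ 2(a + b)` and `b - μ₁` is even; hence `P(λ)` is the set of lattice points of the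
octagon cut out by the Weyl images of these two walls. With `L = 2a + b`, its row `y = 2j - L`
(`0 ≤ j ≤ L`) has `L + 1 - 2d(j)` points, where `d(j)` is the distance from `j` to
`[a, a + b]`, and `∑ d(j) = a(a + 1)`; so there are `(L + 1)² - 2a(a + 1)` weights.
-/

open Finset

section WeylGroup

variable {r : ℕ} {A : Fin r → Fin r → ℤ}

theorem simpleRefl_mem_weylMonoid (i : Fin r) : simpleRefl A i ∈ weylMonoid A :=
  Submonoid.subset_closure ⟨i, rfl⟩

theorem mapsTo_of_mem_weylMonoid {S : Set (Fin r → ℤ)}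
    (hS : ∀ i, Set.MapsTo (simpleRefl A i) S S) {w : Function.End (Fin r → ℤ)}
    (hw : w ∈ weylMonoid A) : Set.MapsTo w S S := by
  induction hw using Submonoid.closure_induction with
  | mem _ hx => obtain ⟨i, rfl⟩ := hx; exact hS i
  | one => exact Set.mapsTo_id S
  | mul _ _ _ _ hx hy => exact hx.comp hy

theorem subset_weightSet_of_mapsTo {S : Set (Fin r → ℤ)} {lam : Fin r → ℤ}
    (hS : ∀ i, Set.MapsTo (simpleRefl A i) S S) (hle : ∀ μ ∈ S, rootLE A μ lam) :
    S ⊆ weightSet A lam :=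
  fun _ hμ _ hw => hle _ (mapsTo_of_mem_weylMonoid hS hw hμ)

end WeylGroup

theorem sum_range_tsub_mul_two {a n : ℕ} (h : a < n) :
    (∑ j ∈ range n, (a - j)) * 2 = a * (a + 1) := by
  have hsub : ∑ j ∈ range (a + 1), (a - j) = ∑ j ∈ range n, (a - j) :=
    sum_subset (range_subset_range.2 h) fun j _ hj => by simp only [mem_range] at hj; omega
  have hrefl : ∑ j ∈ range (a + 1), (a - j) = ∑ j ∈ range (a + 1), j := by
    simpa using sum_range_reflect id (a + 1)
  rw [← hsub, hrefl, sum_range_id_mul_two, Nat.add_sub_cancel, mul_comm]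

namespace CartanB2

local notation "s₀" => simpleRefl cartanB2 0
local notation "s₁" => simpleRefl cartanB2 1

theorem simpleRefl_zero (μ : Fin 2 → ℤ) :
    s₀ μ = ![-μ 0, μ 1 + 2 * μ 0] := by
  simp only [simpleRefl, colRoot, cartanB2, funext_iff, Fin.forall_fin_two, Pi.sub_apply,
    Pi.smul_apply, smul_eq_mul, Matrix.cons_val_zero, Matrix.cons_val_one,
    Matrix.cons_val_fin_one]
  constructor <;> ring

theorem simpleRefl_one (μ : Fin 2 → ℤ) :
    s₁ μ = ![μ 0 + μ 1, -μ 1] := by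
  simp only [simpleRefl, colRoot, cartanB2, funext_iff, Fin.forall_fin_two, Pi.sub_apply,
    Pi.smul_apply, smul_eq_mul, Matrix.cons_val_zero, Matrix.cons_val_one,
    Matrix.cons_val_fin_one]
  constructor <;> ring

theorem rootLE_iff (ν lam : Fin 2 → ℤ) :
    rootLE cartanB2 ν lam ↔
      2 * ν 0 + ν 1 ≤ 2 * lam 0 + lam 1 ∧ ν 0 + ν 1 ≤ lam 0 + lam 1 ∧
        2 ∣ lam 1 - ν 1 := by
  simp only [rootLE, funext_iff, Fin.forall_fin_two, Fin.sum_univ_two, Pi.add_apply,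
    Pi.smul_apply, smul_eq_mul, colRoot, cartanB2, Matrix.cons_val_zero, Matrix.cons_val_one,
    Matrix.cons_val_fin_one]
  constructor
  · rintro ⟨n, h0, h1⟩
    omega
  · intro h
    refine ⟨![((2 * lam 0 + lam 1 - (2 * ν 0 + ν 1)) / 2).toNat,
      (lam 0 + lam 1 - (ν 0 + ν 1)).toNat], ?_⟩
    simp only [Matrix.cons_val_zero, Matrix.cons_val_one, Matrix.cons_val_fin_one]
    omega

def weightOctagon (lam : Fin 2 → ℤ) : Set (Fin 2 → ℤ) :=
  {μ | |2 * μ 0 + μ 1| ≤ 2 * lam 0 + lam 1 ∧ |μ 1| ≤ 2 * lam 0 + lam 1 ∧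
    |μ 0 + μ 1| ≤ lam 0 + lam 1 ∧ |μ 0| ≤ lam 0 + lam 1 ∧ 2 ∣ lam 1 - μ 1}

theorem mapsTo_simpleRefl_weightOctagon (lam : Fin 2 → ℤ) (i : Fin 2) :
    Set.MapsTo (simpleRefl cartanB2 i) (weightOctagon lam) (weightOctagon lam) := by
  intro μ hμ
  simp only [weightOctagon, Set.mem_ofPred_eq, abs_le] at hμ ⊢
  fin_cases i
  · simp only [Fin.zero_eta, simpleRefl_zero, Matrix.cons_val_zero, Matrix.cons_val_one]
    omega
  · simp only [Fin.mk_one, simpleRefl_one, Matrix.cons_val_zero, Matrix.cons_val_one]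
    omega

theorem weightSet_eq_weightOctagon (lam : Fin 2 → ℤ) :
    weightSet cartanB2 lam = weightOctagon lam := by
  refine subset_antisymm (fun μ hμ => ?_) <| subset_weightSet_of_mapsTo
    (mapsTo_simpleRefl_weightOctagon lam) fun μ hμ => ?_
  · -- these four Weyl elements move the two walls of `rootLE` onto all eight walls
    have hs₀ := simpleRefl_mem_weylMonoid (A := cartanB2) 0
    have hs₁ := simpleRefl_mem_weylMonoid (A := cartanB2) 1
    have h₁ : rootLE cartanB2 μ lam := hμ 1 (one_mem _)
    have h₂ : rootLE cartanB2 (s₀ (s₁ μ)) lam := hμ _ (mul_mem hs₀ hs₁)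
    have h₃ : rootLE cartanB2 (s₁ (s₀ μ)) lam := hμ _ (mul_mem hs₁ hs₀)
    have h₄ : rootLE cartanB2 (s₀ (s₁ (s₀ (s₁ μ)))) lam :=
      hμ _ (mul_mem hs₀ (mul_mem hs₁ (mul_mem hs₀ hs₁)))
    simp only [rootLE_iff, simpleRefl_zero, simpleRefl_one, Matrix.cons_val_zero,
      Matrix.cons_val_one] at h₁ h₂ h₃ h₄
    simp only [weightOctagon, Set.mem_ofPred_eq, abs_le]
    omega
  · simp only [weightOctagon, Set.mem_ofPred_eq, abs_le] at hμ
    rw [rootLE_iff]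
    omega

/-- `rowDefect a b j` is the distance from `j` to the interval `[a, a + b]`. -/
def rowDefect (a b j : ℕ) : ℕ := (a - j) + (j - (a + b))

theorem sum_rowDefect (a b : ℕ) :
    ∑ j ∈ range (2 * a + b + 1), rowDefect a b j = a * (a + 1) := by
  have hleft := sum_range_tsub_mul_two (a := a) (n := 2 * a + b + 1) (by omega)
  have hright : ∑ j ∈ range (2 * a + b + 1), (j - (a + b))
      = ∑ j ∈ range (2 * a + b + 1), (a - j) := by
    rw [← sum_range_reflect]
    exact sum_congr rfl fun j hj => by simp only [mem_range] at hj; omega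
  simp only [rowDefect, sum_add_distrib, hright]
  omega

def octagonRow (a b j : ℕ) : Finset (Fin 2 → ℤ) :=
  (range (2 * a + b + 1 - 2 * rowDefect a b j)).image
    fun (i : ℕ) => ![(i : ℤ) - j + rowDefect a b j, 2 * j - (2 * a + b)]

def octagonFinset (a b : ℕ) : Finset (Fin 2 → ℤ) :=
  (range (2 * a + b + 1)).biUnion (octagonRow a b)

theorem coe_octagonFinset (a b : ℕ) :
    (octagonFinset a b : Set (Fin 2 → ℤ)) = weightOctagon ![(a : ℤ), (b : ℤ)] := by
  ext μ
  simp only [octagonFinset, octagonRow, coe_biUnion, coe_image, coe_range, Set.mem_iUnion,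
    Set.mem_image, Set.mem_Iio, weightOctagon, Set.mem_ofPred_eq, abs_le, Matrix.cons_val_zero,
    Matrix.cons_val_one]
  constructor
  · rintro ⟨j, hj, i, hi, rfl⟩
    simp only [Matrix.cons_val_zero, Matrix.cons_val_one]
    unfold rowDefect at *
    omega
  · intro hμ
    set j := ((μ 1 + 2 * a + b) / 2).toNat
    have hd : rowDefect a b j = a - j + (j - (a + b)) := rfl
    refine ⟨j, by omega, (μ 0 + j - rowDefect a b j).toNat, by omega, ?_⟩
    simp only [funext_iff, Fin.forall_fin_two, Matrix.cons_val_zero, Matrix.cons_val_one,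
      Matrix.cons_val_fin_one]
    omega

theorem card_octagonRow (a b j : ℕ) :
    (octagonRow a b j).card = 2 * a + b + 1 - 2 * rowDefect a b j := by
  refine (card_image_of_injective _ fun i i' h => ?_).trans (card_range _)
  have := congrFun h 0
  simp only [Matrix.cons_val_zero] at this
  omega

theorem card_octagonFinset (a b : ℕ) :
    (octagonFinset a b).card + 2 * (a * (a + 1)) = (2 * a + b + 1) ^ 2 := by
  have hdisj : Set.PairwiseDisjoint ↑(range (2 * a + b + 1)) (octagonRow a b) := by
    intro j _ j' _ hjj'
    simp only [Function.onFun, disjoint_left, octagonRow, mem_image]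
    rintro μ ⟨i, -, rfl⟩ ⟨i', -, h⟩
    have := congrFun h 1
    simp only [Matrix.cons_val_one, Matrix.cons_val_fin_one] at this
    omega
  rw [octagonFinset, card_biUnion hdisj, ← sum_rowDefect a b, mul_sum, ← sum_add_distrib]
  calc ∑ j ∈ range (2 * a + b + 1), ((octagonRow a b j).card + 2 * rowDefect a b j)
      = ∑ j ∈ range (2 * a + b + 1), (2 * a + b + 1) := sum_congr rfl fun j hj => by
        simp only [mem_range] at hj
        rw [card_octagonRow, rowDefect]
        omega
    _ = (2 * a + b + 1) ^ 2 := by rw [sum_const, card_range, smul_eq_mul, sq]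

end CartanB2

/-- for `B₂ = 𝔰𝔬₅` (with `α₁` the long simple root), the number of distinct
weights of the irreducible module `L(λ₁ω₁ + λ₂ω₂)` (with `λ₁, λ₂ ∈ ℕ`) equals
`1 + 2(λ₁+λ₂) + 2λ₁² + λ₂² + 4λ₁λ₂`. -/
theorem stmt_3 (l1 l2 : ℕ) :
    (weightSet cartanB2 ![(l1 : ℤ), (l2 : ℤ)]).ncard
      = 1 + 2 * (l1 + l2) + 2 * l1^2 + l2^2 + 4 * l1 * l2 := by
  have hcard := CartanB2.card_octagonFinset l1 l2
  rw [CartanB2.weightSet_eq_weightOctagon, ← CartanB2.coe_octagonFinset, Set.ncard_coe_finset]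
  nlinarith
end

section
/- For $A_2 = \mathfrak{sl}_3$ and any dominant integral weight $\lambda$, the sum of formal exponentials of the distinct weights of $L(\lambda)$ equals $\operatorname{ch}_\lambda - \operatorname{ch}_{\lambda - \alpha_1 - \alpha_2}$, where for $\lambda - \alpha_1 - \alpha_2$ not dominant, the character is interpreted via the shifted Weyl group action: $\operatorname{ch}_{w\cdot\mu} := (-1)^{\ell(w)}\operatorname{ch}_\mu$ for $\mu$ dominant, and $\operatorname{ch}_\nu := 0$ if $\nu + \rho$ lies on a wall. -/
/-- The group algebra (over `ℤ`) of the weight lattice of `A₂ = 𝔰𝔩₃`, weights in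
fundamental-weight coordinates. -/
abbrev A2Ring : Type := AddMonoidAlgebra ℤ (ℤ × ℤ)

/-- Simple reflection `s₁` of `A₂` (`α₁ = 2ω₁ - ω₂`): `s₁(v) = (-v₁, v₂+v₁)`. -/
def s1A2 (v : ℤ × ℤ) : ℤ × ℤ := (-v.1, v.2 + v.1)

/-- Simple reflection `s₂` of `A₂` (`α₂ = -ω₁ + 2ω₂`): `s₂(v) = (v₁+v₂, -v₂)`. -/
def s2A2 (v : ℤ × ℤ) : ℤ × ℤ := (v.1 + v.2, -v.2)

/-- The six elements of the Weyl group of `A₂`, paired with their lengths. -/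
def weylA2 : List ((ℤ × ℤ → ℤ × ℤ) × ℕ) :=
  [(id, 0), (s1A2, 1), (s2A2, 1), (s1A2 ∘ s2A2, 2), (s2A2 ∘ s1A2, 2),
   (s1A2 ∘ s2A2 ∘ s1A2, 3)]

/-- The Weyl vector `ρ = ω₁ + ω₂` of `A₂`. -/
def rhoA2 : ℤ × ℤ := (1, 1)

/-- The Weyl numerator `∑_{w ∈ W} (-1)^{ℓ(w)} e^{w(λ+ρ)}` of `A₂`. -/
noncomputable def weylNumerA2 (lam : ℤ × ℤ) : A2Ring :=
  (weylA2.map fun p => AddMonoidAlgebra.single (p.1 (lam + rhoA2)) ((-1 : ℤ) ^ p.2)).sum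

/-- The Weyl dimension polynomial of `A₂`: `D(λ₁,λ₂) = ½(1+λ₁)(1+λ₂)(2+λ₁+λ₂)`. -/
noncomputable def weylDimA2 (v : ℤ × ℤ) : ℚ :=
  (1/2) * (1 + (v.1 : ℚ)) * (1 + (v.2 : ℚ)) * (2 + (v.1 : ℚ) + v.2)

/-- The layer sum `∑_{μ ∈ P(λ)} e^μ` associated to a character `x`: the sum of formal
exponentials of the distinct weights appearing in `x`. -/
noncomputable def layerSum (x : A2Ring) : A2Ring :=
  ∑ μ ∈ x.coeff.support, AddMonoidAlgebra.single μ (1 : ℤ)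

/-!
Write `λ = (a, b)` and let `𝓗(λ)` be the sum of `e^μ` over the lattice points `μ ≡ λ` (mod the root
lattice) of the hexagon spanned by `W λ`. Multiplying by the Weyl denominator, the Weyl character
formula reduces `ch_λ - ch_{λ-α₁-α₂} = 𝓗(λ)` to `d · 𝓗(λ) = numer(λ) - numer(λ - α₁ - α₂)`; in
the variables `u = e^{-α₁}`, `v = e^{-α₂}` this is a polynomial identity, obtained by summing the
hexagon row by row as geometric series. When `a = 0` or `b = 0`, `λ - α₁ - α₂ + ρ` lies on a wall,
so `numer(λ - α₁ - α₂) = 0` and `ch_λ = 𝓗(λ)`. Hence `ch_λ` is a sum of the `0/1`-valued `𝓗` of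
nested hexagons, its support is the hexagon of `λ`, and `𝓛_λ = 𝓗(λ)`. Finally `chA` agrees with
`ch` on dominant weights and vanishes on walls.
-/

open Finset

/-- `(p, q)` stands for the weight `λ - p α₁ - q α₂` of `λ = (a, b)` (see `hexagonWeight`); these
are the lattice points of the hexagon with vertices `(0,0), (a,0), (a+b,b), (a+b,a+b), (b,a+b),
(0,b)`. -/
def hexagon (a b : ℕ) : Finset (ℕ × ℕ) :=
  (range (a + b + 1) ×ˢ range (a + b + 1)).filter fun z => z.1 ≤ a + z.2 ∧ z.2 ≤ b + z.1

section RingIdentity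

variable {R : Type*} [CommRing R]

/-- The Weyl numerator of `λ` with `λ + ρ = (s, t)`, divided by `e^{λ+ρ}`, in the variables
`u = e^{-α₁}`, `v = e^{-α₂}` (see `weylNumerA2_sub_rho`). -/
def weylNumerPoly (u v : R) (s t : ℕ) : R :=
  1 - u ^ s - v ^ t + u ^ (s + t) * v ^ t + u ^ s * v ^ (s + t) - u ^ (s + t) * v ^ (s + t)

lemma sum_hexagon (u v : R) (a b : ℕ) :
    ∑ z ∈ hexagon a b, u ^ z.1 * v ^ z.2 =
      ∑ p ∈ range (a + 1), u ^ p * ∑ q ∈ range (p + b + 1), v ^ q +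
      ∑ p ∈ range b, u ^ (a + 1 + p) * v ^ (p + 1) * ∑ q ∈ range (a + b - p), v ^ q := by
  rw [hexagon, sum_filter, sum_product, ← sum_range_add_sum_Ico _ (by omega : a + 1 ≤ a + b + 1),
    sum_Ico_eq_sum_range, show a + b + 1 - (a + 1) = b by omega]
  congr 1 <;> refine sum_congr rfl fun p hp => ?_ <;> rw [← sum_filter, mul_sum]
  · have hp : p ≤ a := by grind
    rw [show (range (a + b + 1)).filter (fun q => p ≤ a + q ∧ q ≤ b + p) = range (p + b + 1) by
      ext q; simp only [mem_filter, mem_range]; omega]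
  · have hp : p < b := by grind
    rw [show (range (a + b + 1)).filter (fun q => a + 1 + p ≤ a + q ∧ q ≤ b + (a + 1 + p)) =
        Ico (p + 1) (a + b + 1) by ext q; simp only [mem_filter, mem_range, mem_Ico]; omega,
      sum_Ico_eq_sum_range, show a + b + 1 - (p + 1) = a + b - p by omega]
    exact sum_congr rfl fun q _ => by ring

lemma one_sub_mul_sum_hexagon (u v : R) (a b : ℕ) :
    (1 - v) * ∑ z ∈ hexagon a b, u ^ z.1 * v ^ z.2 =
      ∑ p ∈ range (a + 1), u ^ p - v ^ (b + 1) * ∑ p ∈ range (a + 1), (u * v) ^ p +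
      u ^ (a + 1) * v * ∑ p ∈ range b, (u * v) ^ p -
      u ^ (a + 1) * v ^ (a + b + 1) * ∑ p ∈ range b, u ^ p := by
  have lower_row (p : ℕ) : (1 - v) * (u ^ p * ∑ q ∈ range (p + b + 1), v ^ q) =
      u ^ p - v ^ (b + 1) * (u * v) ^ p := by
    rw [mul_left_comm, mul_neg_geom_sum, add_right_comm, pow_add, mul_pow]; ring
  have upper_row (p : ℕ) (hp : p ∈ range b) :
      (1 - v) * (u ^ (a + 1 + p) * v ^ (p + 1) * ∑ q ∈ range (a + b - p), v ^ q) =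
        u ^ (a + 1) * v * (u * v) ^ p - u ^ (a + 1) * v ^ (a + b + 1) * u ^ p := by
    have hv : v ^ (a + b + 1) = v ^ (p + 1) * v ^ (a + b - p) := by
      rw [← pow_add]; congr 1; grind
    rw [mul_left_comm, mul_neg_geom_sum, hv, pow_add, mul_pow]; ring
  rw [sum_hexagon, mul_add, mul_sum, mul_sum, sum_congr rfl fun p _ => lower_row p,
    sum_congr rfl upper_row, sum_sub_distrib, sum_sub_distrib, ← mul_sum, ← mul_sum, ← mul_sum]
  ring

lemma weylDenom_mul_sum_hexagon (u v : R) (a b : ℕ) :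
    (1 - u) * (1 - v) * (1 - u * v) * ∑ z ∈ hexagon a b, u ^ z.1 * v ^ z.2 =
      weylNumerPoly u v (a + 1) (b + 1) - u * v * weylNumerPoly u v a b := by
  have h := one_sub_mul_sum_hexagon u v a b
  have g₁ := mul_neg_geom_sum u (a + 1)
  have g₂ := mul_neg_geom_sum (u * v) (a + 1)
  have g₃ := mul_neg_geom_sum (u * v) b
  have g₄ := mul_neg_geom_sum u b
  simp only [weylNumerPoly]
  linear_combination (1 - u) * (1 - u * v) * h + (1 - u * v) * g₁ - v ^ (b + 1) * (1 - u) * g₂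
    + u ^ (a + 1) * v * (1 - u) * g₃ - u ^ (a + 1) * v ^ (a + b + 1) * (1 - u * v) * g₄

end RingIdentity

open AddMonoidAlgebra

noncomputable def eNegα₁ : A2Ring := single (-2, 1) 1

noncomputable def eNegα₂ : A2Ring := single (1, -2) 1

lemma weylNumerA2_sub_rho (a b : ℕ) :
    weylNumerA2 (((a : ℤ), (b : ℤ)) - rhoA2) =
      single ((a : ℤ), (b : ℤ)) 1 * weylNumerPoly eNegα₁ eNegα₂ a b := by
  simp only [weylNumerA2, weylA2, sub_add_cancel, weylNumerPoly, List.map_cons, List.map_nil,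
    List.sum_cons, List.sum_nil, mul_add, mul_sub, mul_one]
  simp only [eNegα₁, eNegα₂, s1A2, s2A2, single_pow, single_mul_single, Function.comp_apply,
    id_eq, one_pow, mul_one, pow_zero, pow_one, neg_one_sq, Odd.neg_one_pow (by decide : Odd 3),
    single_neg, Prod.smul_mk, Prod.mk_add_mk, nsmul_eq_mul, Nat.cast_add, add_zero]
  ring_nf

lemma weylNumerA2_zero :
    weylNumerA2 0 = single (1, 1) 1 * ((1 - eNegα₁) * (1 - eNegα₂) * (1 - eNegα₁ * eNegα₂)) := by
  rw [show (0 : ℤ × ℤ) = (((1 : ℕ) : ℤ), ((1 : ℕ) : ℤ)) - rhoA2 from rfl, weylNumerA2_sub_rho,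
    Nat.cast_one, weylNumerPoly]
  ring

lemma weylNumerA2_zero_ne_zero : weylNumerA2 0 ≠ 0 := by
  have h : (weylNumerA2 0).coeff (1, 1) = 1 := by
    simp [weylNumerA2, weylA2, s1A2, s2A2, rhoA2]
  intro h0
  simp [h0] at h

def hexagonWeight (a b : ℕ) (z : ℕ × ℕ) : ℤ × ℤ :=
  ((a : ℤ) - 2 * z.1 + z.2, (b : ℤ) + z.1 - 2 * z.2)

lemma hexagonWeight_injective (a b : ℕ) : Function.Injective (hexagonWeight a b) := by
  intro z w h
  simp only [hexagonWeight, Prod.mk.injEq] at h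
  ext <;> omega

lemma single_hexagonWeight (a b : ℕ) (z : ℕ × ℕ) :
    single (hexagonWeight a b z) 1 =
      single ((a : ℤ), (b : ℤ)) 1 * (eNegα₁ ^ z.1 * eNegα₂ ^ z.2) := by
  simp only [hexagonWeight, eNegα₁, eNegα₂, single_pow, single_mul_single, one_pow, mul_one,
    Prod.smul_mk, Prod.mk_add_mk, nsmul_eq_mul]
  ring_nf

def hexagonWeights (a b : ℕ) : Finset (ℤ × ℤ) := (hexagon a b).image (hexagonWeight a b)

noncomputable def hexagonSum (a b : ℕ) : A2Ring := ∑ ν ∈ hexagonWeights a b, single ν 1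

lemma hexagonSum_eq_sum_hexagon (a b : ℕ) :
    hexagonSum a b =
      single ((a : ℤ), (b : ℤ)) 1 * ∑ z ∈ hexagon a b, eNegα₁ ^ z.1 * eNegα₂ ^ z.2 := by
  rw [hexagonSum, hexagonWeights, sum_image fun z _ w _ h => hexagonWeight_injective a b h, mul_sum]
  exact sum_congr rfl fun z _ => single_hexagonWeight a b z

lemma weylNumerA2_zero_mul_hexagonSum (a b : ℕ) :
    weylNumerA2 0 * hexagonSum a b =
      weylNumerA2 ((a : ℤ), (b : ℤ)) - weylNumerA2 (((a : ℤ), (b : ℤ)) - (1, 1)) := by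
  have shift : (single (1, 1) 1 : A2Ring) * single ((a : ℤ), (b : ℤ)) 1 =
      single (((a + 1 : ℕ) : ℤ), ((b + 1 : ℕ) : ℤ)) 1 := by
    rw [single_mul_single, mul_one]; congr 1; ext <;> simp [add_comm]
  have rho_mul : (single (1, 1) 1 : A2Ring) * (eNegα₁ * eNegα₂) = 1 := by
    rw [eNegα₁, eNegα₂, single_mul_single, single_mul_single, mul_one, mul_one]; rfl
  have numer_top : weylNumerA2 ((a : ℤ), (b : ℤ)) =
      single (((a + 1 : ℕ) : ℤ), ((b + 1 : ℕ) : ℤ)) 1 * weylNumerPoly eNegα₁ eNegα₂ (a + 1) (b + 1) := by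
    rw [← weylNumerA2_sub_rho]; congr 1; ext <;> simp [rhoA2]
  have numer_bot : weylNumerA2 (((a : ℤ), (b : ℤ)) - (1, 1)) =
      single ((a : ℤ), (b : ℤ)) 1 * weylNumerPoly eNegα₁ eNegα₂ a b :=
    weylNumerA2_sub_rho a b
  rw [weylNumerA2_zero, hexagonSum_eq_sum_hexagon, numer_top, numer_bot]
  linear_combination (single (1, 1) 1 * single ((a : ℤ), (b : ℤ)) 1) *
      weylDenom_mul_sum_hexagon eNegα₁ eNegα₂ a b
    + weylNumerPoly eNegα₁ eNegα₂ (a + 1) (b + 1) * shift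
    - single ((a : ℤ), (b : ℤ)) 1 * weylNumerPoly eNegα₁ eNegα₂ a b * rho_mul

lemma Finsupp.support_add_of_nonneg {ι α : Type*} [AddCommMonoid α] [PartialOrder α]
    [IsOrderedAddMonoid α] [DecidableEq ι] {f g : ι →₀ α} (hf : 0 ≤ f) (hg : 0 ≤ g) :
    (f + g).support = f.support ∪ g.support := by
  ext i
  simp only [mem_union, Finsupp.mem_support_iff, Finsupp.add_apply, ne_eq,
    add_eq_zero_iff_of_nonneg (hf i) (hg i)]
  tauto

lemma coeff_sum_single_one {G : Type*} [AddMonoid G] [DecidableEq G] (s : Finset G) (ν : G) :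
    (∑ μ ∈ s, single μ (1 : ℤ)).coeff ν = if ν ∈ s then 1 else 0 := by
  simp [AddMonoidAlgebra.coeff_sum, Finsupp.finsetSum_apply, Finsupp.single_apply]

lemma hexagonSum_coeff_nonneg (a b : ℕ) : 0 ≤ (hexagonSum a b).coeff := fun ν => by
  rw [hexagonSum, coeff_sum_single_one]; split_ifs <;> simp

lemma support_hexagonSum (a b : ℕ) : (hexagonSum a b).coeff.support = hexagonWeights a b := by
  ext ν; rw [hexagonSum, Finsupp.mem_support_iff, coeff_sum_single_one]; simp

lemma hexagonWeights_subset_succ (a b : ℕ) :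
    hexagonWeights a b ⊆ hexagonWeights (a + 1) (b + 1) := by
  intro ν hν
  simp only [hexagonWeights, mem_image] at hν ⊢
  obtain ⟨⟨p, q⟩, hpq, rfl⟩ := hν
  refine ⟨(p + 1, q + 1), ?_, ?_⟩
  · simp only [hexagon, mem_filter, mem_product, mem_range] at hpq ⊢; omega
  · simp only [hexagonWeight]; push_cast; ext <;> simp only <;> ring

@[simp]
lemma natCast_add_one_sub_one_one (a b : ℕ) :
    (((a + 1 : ℕ) : ℤ), ((b + 1 : ℕ) : ℤ)) - (1, 1) = ((a : ℤ), (b : ℤ)) := by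
  ext <;> simp

lemma weylDimA2_sub_one_one (a b : ℕ) :
    weylDimA2 (((a : ℤ), (b : ℤ)) - (1, 1)) = a * b * (a + b) / 2 := by
  simp only [weylDimA2, Prod.fst_sub, Prod.snd_sub]; push_cast; ring

lemma weylNumerA2_sub_one_one_of_wall (a b : ℕ) (h : a = 0 ∨ b = 0) :
    weylNumerA2 (((a : ℤ), (b : ℤ)) - (1, 1)) = 0 := by
  rw [show ((1, 1) : ℤ × ℤ) = rhoA2 from rfl, weylNumerA2_sub_rho, weylNumerPoly]
  rcases h with rfl | rfl <;> simp

def IsWeylCharacterA2 (ch : ℤ × ℤ → A2Ring) : Prop :=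
  ∀ lam : ℤ × ℤ, 0 ≤ lam.1 → 0 ≤ lam.2 → weylNumerA2 0 * ch lam = weylNumerA2 lam

namespace IsWeylCharacterA2

variable {ch : ℤ × ℤ → A2Ring}

lemma weylNumerA2_zero_mul (hch : IsWeylCharacterA2 ch) (a b : ℕ) :
    weylNumerA2 0 * ch ((a : ℤ), (b : ℤ)) = weylNumerA2 ((a : ℤ), (b : ℤ)) :=
  hch _ (Int.natCast_nonneg a) (Int.natCast_nonneg b)

lemma eq_hexagonSum_of_wall (hch : IsWeylCharacterA2 ch) (a b : ℕ) (h : a = 0 ∨ b = 0) :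
    ch ((a : ℤ), (b : ℤ)) = hexagonSum a b := by
  apply mul_left_cancel₀ weylNumerA2_zero_ne_zero
  rw [hch.weylNumerA2_zero_mul, weylNumerA2_zero_mul_hexagonSum,
    weylNumerA2_sub_one_one_of_wall a b h, sub_zero]

lemma sub_eq_hexagonSum (hch : IsWeylCharacterA2 ch) (a b : ℕ) :
    ch (((a + 1 : ℕ) : ℤ), ((b + 1 : ℕ) : ℤ)) - ch ((a : ℤ), (b : ℤ)) =
      hexagonSum (a + 1) (b + 1) := by
  apply mul_left_cancel₀ weylNumerA2_zero_ne_zero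
  rw [mul_sub, hch.weylNumerA2_zero_mul, hch.weylNumerA2_zero_mul,
    weylNumerA2_zero_mul_hexagonSum, natCast_add_one_sub_one_one]

lemma coeff_nonneg_and_support (hch : IsWeylCharacterA2 ch) (a b : ℕ) :
    0 ≤ (ch ((a : ℤ), (b : ℤ))).coeff ∧
      (ch ((a : ℤ), (b : ℤ))).coeff.support = hexagonWeights a b := by
  induction a generalizing b with
  | zero =>
    rw [hch.eq_hexagonSum_of_wall 0 b (.inl rfl)]
    exact ⟨hexagonSum_coeff_nonneg 0 b, support_hexagonSum 0 b⟩
  | succ a ih =>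
    cases b with
    | zero =>
      rw [hch.eq_hexagonSum_of_wall (a + 1) 0 (.inr rfl)]
      exact ⟨hexagonSum_coeff_nonneg _ 0, support_hexagonSum _ 0⟩
    | succ b =>
      obtain ⟨ih_nonneg, ih_support⟩ := ih b
      rw [← sub_add_cancel (ch _) (ch ((a : ℤ), (b : ℤ))), hch.sub_eq_hexagonSum, coeff_add]
      refine ⟨add_nonneg (hexagonSum_coeff_nonneg _ _) ih_nonneg, ?_⟩
      rw [Finsupp.support_add_of_nonneg (hexagonSum_coeff_nonneg _ _) ih_nonneg, support_hexagonSum,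
        ih_support, union_eq_left.mpr (hexagonWeights_subset_succ a b)]

lemma layerSum_eq (hch : IsWeylCharacterA2 ch) (a b : ℕ) :
    layerSum (ch ((a : ℤ), (b : ℤ))) = hexagonSum a b := by
  rw [layerSum, (hch.coeff_nonneg_and_support a b).2]
  rfl

end IsWeylCharacterA2

/-- for `A₂ = 𝔰𝔩₃`, with `ch` the irreducible characters (Weyl character
formula, hypothesis `hch`) and `chA` their auxiliary extension
(`ch_{w·μ} := (-1)^{ℓ(w)} ch_μ` for dominant `μ`, hypothesis `haux`; `ch_ν := 0` when
`ν + ρ` lies on a wall, i.e. `D(ν) = 0`, hypothesis `hwall`), the layer sum of any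
dominant integral weight `λ` satisfies `𝓛_λ = ch_λ - ch_{λ - α₁ - α₂}`;
in fundamental-weight coordinates `α₁ + α₂ = (1,1)`. -/
theorem stmt_7 (ch chA : ℤ × ℤ → A2Ring)
    (hch : ∀ lam : ℤ × ℤ, 0 ≤ lam.1 → 0 ≤ lam.2 →
      weylNumerA2 0 * ch lam = weylNumerA2 lam)
    (haux : ∀ lam : ℤ × ℤ, 0 ≤ lam.1 → 0 ≤ lam.2 → ∀ p ∈ weylA2,
      chA (p.1 (lam + rhoA2) - rhoA2) = ((-1 : ℤ) ^ p.2) • ch lam)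
    (hwall : ∀ ν : ℤ × ℤ, weylDimA2 ν = 0 → chA ν = 0) :
    ∀ lam : ℤ × ℤ, 0 ≤ lam.1 → 0 ≤ lam.2 →
      layerSum (ch lam) = chA lam - chA (lam - (1, 1)) := by
  have chA_eq_ch (a b : ℕ) : chA ((a : ℤ), (b : ℤ)) = ch ((a : ℤ), (b : ℤ)) := by
    simpa using haux ((a : ℤ), (b : ℤ)) (by simp) (by simp) (id, 0) (by simp [weylA2])
  rintro ⟨x, y⟩ (hx : 0 ≤ x) (hy : 0 ≤ y)
  lift x to ℕ using hx with a
  lift y to ℕ using hy with b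
  rw [IsWeylCharacterA2.layerSum_eq hch, chA_eq_ch]
  by_cases h : a = 0 ∨ b = 0
  · rw [hwall _ (by rw [weylDimA2_sub_one_one]; rcases h with rfl | rfl <;> simp), sub_zero,
      IsWeylCharacterA2.eq_hexagonSum_of_wall hch a b h]
  · obtain ⟨a, rfl⟩ := Nat.exists_eq_add_one_of_ne_zero (by omega : a ≠ 0)
    obtain ⟨b, rfl⟩ := Nat.exists_eq_add_one_of_ne_zero (by omega : b ≠ 0)
    rw [natCast_add_one_sub_one_one, chA_eq_ch, IsWeylCharacterA2.sub_eq_hexagonSum hch]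
end
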